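/- Let H be a Hopf algebra over a field k generated as an algebra by primitive elements, with antipode S, unit η, counit ε, m-fold multiplication m^{(n)} : H^{⊗n} → H and iterated coproduct Δ^{(n)} : H → H^{⊗n}. Then for every h ∈ H the sum Σ_{n ≥ 0} (m^{(n)} ∘ (η∘ε − id_H)^{⊗n} ∘ Δ^{(n)})(h) has only finitely many nonzero terms, and S(h) equals this sum. -/

import Mathlib

open TensorProduct

section Defs
variable (k H : Type*) [Field k] [Ring H] [Bialgebra k H]

/-- `Tp n` is the `(n+1)`-fold tensor power `H ⊗ (H ⊗ (⋯ ⊗ H))`. -/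
noncomputable def Tp : ℕ → ModuleCat k
  | 0 => ModuleCat.of k H
  | n + 1 => ModuleCat.of k (H ⊗[k] (Tp n))

/-- `Δ ⊗ id^{⊗ n} : H^{⊗(n+1)} → H^{⊗(n+2)}`, the coproduct applied to the first factor. -/
noncomputable def copFirst : (n : ℕ) → (Tp k H n →ₗ[k] Tp k H (n + 1))
  | 0 => (Coalgebra.comul : H →ₗ[k] H ⊗[k] H)
  | n + 1 =>
      (TensorProduct.assoc k H H (Tp k H n)).toLinearMap ∘ₗ
        TensorProduct.map (Coalgebra.comul : H →ₗ[k] H ⊗[k] H) LinearMap.id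

/-- the iterated coproduct `Δ^{(n+1)} : H → H^{⊗(n+1)}`, with `Δ^{(1)} = id`. -/
noncomputable def itCop : (n : ℕ) → (ModuleCat.of k H →ₗ[k] Tp k H n)
  | 0 => LinearMap.id
  | n + 1 => copFirst k H n ∘ₗ itCop n

/-- the factorwise map `f^{⊗(n+1)} : H^{⊗(n+1)} → H^{⊗(n+1)}` for `f : H → H`. -/
noncomputable def itMap (f : H →ₗ[k] H) : (n : ℕ) → (Tp k H n →ₗ[k] Tp k H n)
  | 0 => f
  | n + 1 => TensorProduct.map f (itMap f n)

/-- the iterated multiplication `m^{(n+1)} : H^{⊗(n+1)} → H`, with `m^{(1)} = id`. -/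
noncomputable def itMul : (n : ℕ) → (Tp k H n →ₗ[k] ModuleCat.of k H)
  | 0 => LinearMap.id
  | n + 1 => LinearMap.mul' k H ∘ₗ TensorProduct.map LinearMap.id (itMul n)

/-- primitive elements: `Δ(x) = x ⊗ 1 + 1 ⊗ x` -/
noncomputable def IsPrim (x : H) : Prop :=
  (Coalgebra.comul (R := k) x) = x ⊗ₜ[k] (1 : H) + (1 : H) ⊗ₜ[k] x

/-- `η∘ε − id_H : H → H` -/
noncomputable def unitCounitSubId : H →ₗ[k] H :=
  (Algebra.linearMap k H) ∘ₗ (Coalgebra.counit : H →ₗ[k] k) - (LinearMap.id : H →ₗ[k] H)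

/-- the `n`-th term `(m^{(n)} ∘ (η∘ε − id)^{⊗ n} ∘ Δ^{(n)})(h)` of the antipode series;
the term for `n = 0` is `(η∘ε)(h)`, and the term for `n + 1` uses `n + 1` tensor factors. -/
noncomputable def antipodeTerm (h : H) : ℕ → H
  | 0 => algebraMap k H (Coalgebra.counit (R := k) h)
  | n + 1 => itMul k H n (itMap k H (unitCounitSubId k H) n (itCop k H n h))

end Defs

/-!
In the convolution algebra of linear endomorphisms of `H`, `id = 1 - T` with `T = η∘ε - id`,
and the `n`-th term of the series is `Tⁿ(h)`; the antipode `S` is the inverse of `id`, so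
`S = ∑_{n ≤ p} Tⁿ + T^{p+1} * S` for every `p`.
Let `V` be the span of `1` and the primitive elements. Then `Δ(Vᵖ) ⊆ ∑_{i+j=p} Vⁱ ⊗ Vʲ`, and since
`T` kills `V⁰ = k·1`, induction on `n` shows that `Tⁿ` vanishes on `Vᵖ` once `n > p`. As `H` is
generated by primitives, every `h` lies in some `Vᵖ`, so only the terms `n ≤ p` survive and
`(T^{p+1} * S)(h) = 0`.
-/

open WithConv

theorem TensorProduct.assoc_comp_rTensor_comp_lTensor {R A B C N P : Type*} [CommSemiring R]
    [AddCommMonoid A] [AddCommMonoid B] [AddCommMonoid C] [AddCommMonoid N] [AddCommMonoid P]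
    [Module R A] [Module R B] [Module R C] [Module R N] [Module R P]
    (f : A →ₗ[R] B ⊗[R] C) (g : N →ₗ[R] P) :
    (TensorProduct.assoc R B C P).toLinearMap ∘ₗ f.rTensor P ∘ₗ g.lTensor A =
      (g.lTensor C).lTensor B ∘ₗ (TensorProduct.assoc R B C N).toLinearMap ∘ₗ f.rTensor N := by
  rw [LinearMap.rTensor_comp_lTensor, ← LinearMap.lTensor_comp_rTensor, LinearMap.lTensor_tensor]
  simp only [← LinearMap.comp_assoc, LinearEquiv.comp_symm, LinearMap.id_comp]

section IteratedMaps

variable {k H : Type*} [Field k] [Ring H] [Bialgebra k H]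

theorem itCop_succ (n : ℕ) :
    itCop k H (n + 1) = (itCop k H n).lTensor H ∘ₗ Coalgebra.comul := by
  induction n with
  | zero => exact (LinearMap.lTensor_id (R := k) H H).symm ▸ (LinearMap.id_comp _).symm
  | succ n ih =>
    -- pointwise: the `ModuleCat` instances on `Tp k H n` match the tensor product's only up to
    -- unfolding, which blocks rewriting with equations of linear maps
    ext x
    have natural := LinearMap.congr_fun (TensorProduct.assoc_comp_rTensor_comp_lTensor
      (R := k) Coalgebra.comul (itCop k H n)) (Coalgebra.comul x)
    simp only [LinearMap.comp_apply, LinearEquiv.coe_coe] at natural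
    refine (congrArg (copFirst k H (n + 1)) (LinearMap.congr_fun ih x)).trans (natural.trans ?_)
    rw [Coalgebra.coassoc_apply, ← LinearMap.comp_apply (LinearMap.lTensor _ _),
      ← LinearMap.lTensor_comp, ih]
    rfl

theorem itMul_comp_itMap_comp_itCop (f : H →ₗ[k] H) (n : ℕ) :
    itMul k H n ∘ₗ itMap k H f n ∘ₗ itCop k H n = ofConv (toConv f ^ (n + 1)) := by
  induction n with
  | zero => rw [zero_add, pow_one]; rfl
  | succ n ih =>
    rw [pow_succ', LinearMap.convMul_def, ofConv_toConv, ← ih, itCop_succ]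
    ext x
    change LinearMap.mul' k H (TensorProduct.map LinearMap.id (itMul k H n)
      (TensorProduct.map f (itMap k H f n) ((itCop k H n).lTensor H (Coalgebra.comul x)))) = _
    rw [LinearMap.map_lTensor, TensorProduct.map_map, LinearMap.id_comp]
    rfl

theorem antipodeTerm_eq_pow_apply (h : H) (n : ℕ) :
    antipodeTerm k H h n = (toConv (unitCounitSubId k H) ^ n) h := by
  cases n with
  | zero => rfl
  | succ n => exact LinearMap.congr_fun (itMul_comp_itMap_comp_itCop _ n) h

end IteratedMaps

namespace Submodule

section Algebra

variable {R A : Type*} [CommSemiring R] [Semiring A] [Algebra R A]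

def tensorFiltration (V : Submodule R A) (p : ℕ) : Submodule R (A ⊗[R] A) :=
  span R {z | ∃ i j, i + j = p ∧ ∃ u ∈ V ^ i, ∃ v ∈ V ^ j, u ⊗ₜ v = z}

variable {V : Submodule R A}

theorem tmul_mem_tensorFiltration {i j : ℕ} {u v : A} (hu : u ∈ V ^ i) (hv : v ∈ V ^ j) :
    u ⊗ₜ[R] v ∈ V.tensorFiltration (i + j) :=
  subset_span ⟨i, j, rfl, u, hu, v, hv, rfl⟩

theorem tensorFiltration_mul_le (p q : ℕ) :
    V.tensorFiltration p * V.tensorFiltration q ≤ V.tensorFiltration (p + q) := by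
  rw [tensorFiltration, tensorFiltration, span_mul_span, span_le]
  rintro _ ⟨_, ⟨i, j, rfl, u, hu, v, hv, rfl⟩, _, ⟨i', j', rfl, u', hu', v', hv', rfl⟩, rfl⟩
  dsimp only
  rw [Algebra.TensorProduct.tmul_mul_tmul, add_add_add_comm]
  exact tmul_mem_tensorFiltration (pow_add V i i' ▸ mul_mem_mul hu hu')
    (pow_add V j j' ▸ mul_mem_mul hv hv')

theorem one_le_tensorFiltration_zero : 1 ≤ V.tensorFiltration 0 := by
  have hone : (1 : A) ∈ V ^ 0 := pow_zero V ▸ one_le.mp le_rfl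
  rw [one_eq_span, span_le, Set.singleton_subset_iff, Algebra.TensorProduct.one_def]
  exact tmul_mem_tensorFiltration (i := 0) (j := 0) hone hone

theorem pow_le_tensorFiltration {M : Submodule R (A ⊗[R] A)} (hM : M ≤ V.tensorFiltration 1) :
    ∀ p, M ^ p ≤ V.tensorFiltration p
  | 0 => pow_zero M ▸ one_le_tensorFiltration_zero
  | p + 1 => by
    rw [pow_succ]
    exact (mul_le_mul' (pow_le_tensorFiltration hM p) hM).trans (tensorFiltration_mul_le p 1)

end Algebra

section Bialgebra

variable {R A : Type*} [CommSemiring R] [Semiring A] [Bialgebra R A] {V : Submodule R A}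

theorem comul_mem_tensorFiltration
    (hV : ∀ x ∈ V, Coalgebra.comul (R := R) x ∈ V.tensorFiltration 1) {p : ℕ} {h : A}
    (hh : h ∈ V ^ p) : Coalgebra.comul (R := R) h ∈ V.tensorFiltration p := by
  have hV' : V.map (Bialgebra.comulAlgHom R A).toLinearMap ≤ V.tensorFiltration 1 :=
    map_le_iff_le_comap.mpr hV
  refine pow_le_tensorFiltration hV' p ?_
  rw [← Submodule.map_pow]
  exact mem_map_of_mem hh

theorem convMul_apply_eq_zero {B : Type*} [Semiring B] [Algebra R B]
    {f g : WithConv (A →ₗ[R] B)} {p : ℕ} {h : A}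
    (hh : Coalgebra.comul (R := R) h ∈ V.tensorFiltration p)
    (hfg : ∀ i j, i + j = p → ∀ u ∈ V ^ i, ∀ v ∈ V ^ j, f u * g v = 0) : (f * g) h = 0 := by
  rw [LinearMap.convMul_apply]
  generalize Coalgebra.comul (R := R) h = z at hh ⊢
  induction hh using span_induction with
  | mem _ hz =>
    obtain ⟨i, j, hij, u, hu, v, hv, rfl⟩ := hz
    simpa using hfg i j hij u hu v hv
  | zero => simp
  | add _ _ _ _ hz hw => simp [hz, hw]
  | smul c _ _ hz => simp [hz]

theorem convPow_apply_eq_zero_of_lt {B : Type*} [Semiring B] [Algebra R B]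
    (hV : ∀ x ∈ V, Coalgebra.comul (R := R) x ∈ V.tensorFiltration 1)
    {f : WithConv (A →ₗ[R] B)} (hf : f 1 = 0) :
    ∀ {n p : ℕ} {h : A}, p < n → h ∈ V ^ p → (f ^ n) h = 0
  | n + 1, p, h, hpn, hh => by
    rw [pow_succ']
    refine convMul_apply_eq_zero (comul_mem_tensorFiltration hV hh) fun i j hij u hu v hv => ?_
    rcases i with _ | i
    · obtain ⟨c, rfl⟩ := mem_one.mp (pow_zero V ▸ hu)
      rw [Algebra.algebraMap_eq_smul_one, map_smul, hf, smul_zero, zero_mul]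
    · rw [convPow_apply_eq_zero_of_lt hV hf (by omega) hv, mul_zero]

end Bialgebra

end Submodule

section PrimitivelyGenerated

variable {k H : Type*} [Field k] [Ring H] [Bialgebra k H]

variable (k H) in
noncomputable def primSpan : Submodule k H :=
  Submodule.span k (insert 1 {x | IsPrim k H x})

theorem one_le_primSpan : 1 ≤ primSpan k H :=
  Submodule.one_le.mpr (Submodule.subset_span (Set.mem_insert 1 _))

theorem comul_mem_tensorFiltration_one_of_mem_primSpan (x : H) (hx : x ∈ primSpan k H) :
    Coalgebra.comul (R := k) x ∈ (primSpan k H).tensorFiltration 1 := by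
  have hone (n : ℕ) : (1 : H) ∈ primSpan k H ^ n :=
    Submodule.one_le.mp (one_le_pow_of_one_le' one_le_primSpan n)
  have hmem {y : H} (hy : IsPrim k H y) : y ∈ primSpan k H ^ 1 := by
    rw [pow_one]
    exact Submodule.subset_span (Set.mem_insert_of_mem 1 hy)
  induction hx using Submodule.span_induction with
  | mem y hy =>
    rcases Set.mem_insert_iff.mp hy with rfl | hy
    · rw [Bialgebra.comul_one, Algebra.TensorProduct.one_def]
      exact Submodule.tmul_mem_tensorFiltration (i := 1) (j := 0) (hone 1) (hone 0)
    · rw [hy]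
      exact add_mem (Submodule.tmul_mem_tensorFiltration (i := 1) (j := 0) (hmem hy) (hone 0))
        (Submodule.tmul_mem_tensorFiltration (i := 0) (j := 1) (hone 0) (hmem hy))
  | zero => simp
  | add _ _ _ _ hy hz => simpa using add_mem hy hz
  | smul c _ _ hy => simpa using Submodule.smul_mem _ c hy

theorem exists_mem_primSpan_pow (hgen : Algebra.adjoin k {x : H | IsPrim k H x} = ⊤) (h : H) :
    ∃ p, h ∈ primSpan k H ^ p := by
  have hh : h ∈ Algebra.adjoin k {x : H | IsPrim k H x} := hgen ▸ Algebra.mem_top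
  induction hh using Algebra.adjoin_induction with
  | mem x hx =>
    exact ⟨1, (pow_one (primSpan k H)).symm ▸ Submodule.subset_span (Set.mem_insert_of_mem 1 hx)⟩
  | algebraMap c => exact ⟨0, (pow_zero (primSpan k H)).symm ▸ Submodule.algebraMap_mem c⟩
  | add x y _ _ hx hy =>
    obtain ⟨p, hp⟩ := hx
    obtain ⟨q, hq⟩ := hy
    exact ⟨max p q, add_mem (pow_le_pow_right' one_le_primSpan (le_max_left p q) hp)
      (pow_le_pow_right' one_le_primSpan (le_max_right p q) hq)⟩
  | mul x y _ _ hx hy =>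
    obtain ⟨p, hp⟩ := hx
    obtain ⟨q, hq⟩ := hy
    exact ⟨p + q, pow_add (primSpan k H) p q ▸ Submodule.mul_mem_mul hp hq⟩

end PrimitivelyGenerated

/-- For a Hopf algebra `H` over a field generated by primitive elements,
the series `Σ_{n ≥ 0} (m^{(n)} ∘ (η∘ε − id_H)^{⊗n} ∘ Δ^{(n)})(h)` has finitely many
nonzero terms and its (finite) sum equals `S(h)`, for every `h ∈ H`. -/
theorem antipode_formula_of_primitively_generated
    {k H : Type*} [Field k] [Ring H] [HopfAlgebra k H]
    (hgen : Algebra.adjoin k {x : H | IsPrim k H x} = ⊤) (h : H) :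
    (Function.support (antipodeTerm k H h)).Finite ∧
    HopfAlgebra.antipode (R := k) h = ∑ᶠ n : ℕ, antipodeTerm k H h n := by
  set T := toConv (unitCounitSubId k H)
  set S := toConv (HopfAlgebra.antipode k (A := H))
  obtain ⟨p, hp⟩ := exists_mem_primSpan_pow hgen h
  have hV := comul_mem_tensorFiltration_one_of_mem_primSpan (k := k) (H := H)
  have hT1 : T 1 = 0 := by simp [T, unitCounitSubId]
  have hvanish {n q : ℕ} {x : H} (hqn : q < n) (hx : x ∈ primSpan k H ^ q) : (T ^ n) x = 0 :=
    Submodule.convPow_apply_eq_zero_of_lt hV hT1 hqn hx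
  have hsupp : Function.support (antipodeTerm k H h) ⊆ Finset.range (p + 1) := fun n hn ↦ by
    rw [Function.mem_support, antipodeTerm_eq_pow_apply] at hn
    by_contra hnp
    exact hn (hvanish (by simpa using hnp) hp)
  refine ⟨(Finset.range (p + 1)).finite_toSet.subset hsupp, ?_⟩
  have hgeom : S = ∑ n ∈ Finset.range (p + 1), T ^ n + T ^ (p + 1) * S := by
    have hid : 1 - T = toConv LinearMap.id := sub_sub_cancel _ _
    calc S = ((∑ n ∈ Finset.range (p + 1), T ^ n) * (1 - T) + T ^ (p + 1)) * S := by
          rw [geom_sum_mul_neg, sub_add_cancel, one_mul]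
      _ = _ := by rw [add_mul, mul_assoc, hid, LinearMap.id_mul_antipode, mul_one]
  have htail : (T ^ (p + 1) * S) h = 0 :=
    Submodule.convMul_apply_eq_zero (Submodule.comul_mem_tensorFiltration hV hp)
      fun i j hij u hu v hv ↦ by rw [hvanish (by omega) hu, zero_mul]
  rw [finsum_eq_finsetSum_of_support_subset _ hsupp]
  change S h = _
  rw [hgeom]
  simp [htail, antipodeTerm_eq_pow_apply, T]
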